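/- The Lie algebra m_0(8) on ℝ^8 with bracket μ(e_1,e_i) = e_{i+1} for i = 2,…,7 (all other basis brackets zero) admits the diagonal derivation φ with φ(e_1) = e_1, φ(e_2) = 26 e_2, and φ(e_i) = (24 + i) e_i for i = 3,…,8, and also the diagonal derivation ψ with ψ(e_1) = 0, ψ(e_i) = e_i for i = 2,…,8; φ and ψ are linearly independent commuting semisimple derivations, so m_0(8) has rank at least 2. -/

import Mathlib

noncomputable section

def e (k : ℕ) : Fin 8 → ℝ := fun m => if (m : ℕ) = k then 1 else 0

/-- Structure constants of `m₀(8)` for `i < j` (0-based): `μ(e₁,e_i) = e_{i+1}`,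
`i = 2,…,7`, all other brackets zero. -/
def cplus (i j : ℕ) : Fin 8 → ℝ :=
  if i = 0 ∧ 1 ≤ j ∧ j ≤ 6 then e (j + 1) else 0

def cst (i j : ℕ) : Fin 8 → ℝ :=
  if i < j then cplus i j else if j < i then -cplus j i else 0

/-- The bracket of `m₀(8)`. -/
def mu (x y : Fin 8 → ℝ) : Fin 8 → ℝ :=
  fun k => ∑ i : Fin 8, ∑ j : Fin 8, x i * y j * cst (i : ℕ) (j : ℕ) k

/-- Diagonal entries of `φ`: `φ(e₁) = e₁`, `φ(e₂) = 26 e₂`, `φ(e_i) = (24+i) e_i` for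
`i = 3,…,8` (0-based index `k`: entry `k + 25` for `k ≥ 2`). -/
def dphi : Fin 8 → ℝ :=
  fun k => if (k : ℕ) = 0 then 1 else if (k : ℕ) = 1 then 26 else (k : ℕ) + 25

/-- Diagonal entries of `ψ`: `ψ(e₁) = 0`, `ψ(e_i) = e_i` for `i = 2,…,8`. -/
def dpsi : Fin 8 → ℝ := fun k => if (k : ℕ) = 0 then 0 else 1

/-- The diagonal endomorphism `φ`. -/
def phi : Module.End ℝ (Fin 8 → ℝ) := Matrix.toLin' (Matrix.diagonal dphi)

/-- The diagonal endomorphism `ψ`. -/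
def psi : Module.End ℝ (Fin 8 → ℝ) := Matrix.toLin' (Matrix.diagonal dpsi)

/-!
All maps involved are diagonal in the basis `e₁, …, e₈`. A diagonal map with entries `d` is a
derivation of a bracket with structure constants `c` as soon as `d k = d i + d j` whenever
`c i j k ≠ 0`; for `m₀(8)` this is the single family of conditions `d_{j+1} = d_1 + d_j`, which
both `φ` and `ψ` satisfy. Diagonal maps commute, are annihilated by the squarefree polynomial
`∏ (X - a)` over their distinct entries, hence are semisimple, and `d ↦ diag d` is injective, so
linear independence of `φ, ψ` reduces to that of their diagonals, visible on `e₁, e₂`.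
-/

open Matrix Polynomial

section Diagonal

variable {ι K : Type*} [Fintype ι] [DecidableEq ι]

theorem Matrix.toLin'_diagonal_apply [CommSemiring K] (d x : ι → K) (k : ι) :
    toLin' (diagonal d) x k = d k * x k := by
  rw [toLin'_apply, mulVec_diagonal]

theorem Matrix.commute_toLin'_diagonal [CommSemiring K] (a b : ι → K) :
    Commute (toLin' (diagonal a)) (toLin' (diagonal b)) :=
  ((Commute.all a b).map (diagonalAlgHom K)).map (toLinAlgEquiv' (R := K))

theorem LinearIndependent.toLin'_diagonal [CommSemiring K] {ι' : Type*} {v : ι' → ι → K}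
    (hv : LinearIndependent K v) :
    LinearIndependent K fun i => toLin' (diagonal (v i)) := by
  let f : (ι → K) →ₗ[K] Module.End K (ι → K) :=
    (toLin' : Matrix ι ι K ≃ₗ[K] _).toLinearMap ∘ₗ diagonalLinearMap ι K K
  have hf : Function.Injective f := fun _ _ h => diagonal_injective (toLin'.injective h)
  exact hv.map_injOn f hf.injOn

theorem Matrix.isSemisimple_toLin'_diagonal [Field K] (d : ι → K) :
    Module.End.IsSemisimple (toLin' (diagonal d)) := by
  classical
  let p : K[X] := ∏ a ∈ Finset.univ.image d, (X - C a)
  have hp : Squarefree p :=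
    (separable_prod_X_sub_C_iff'.mpr fun _ _ _ _ h => h).squarefree
  have hdp : aeval d p = 0 := by
    funext k
    rw [aeval_pi_apply₂, Pi.zero_apply]
    simp only [p, map_prod, map_sub, aeval_X, aeval_C]
    exact Finset.prod_eq_zero (Finset.mem_image_of_mem d (Finset.mem_univ k)) (sub_self _)
  refine Module.End.isSemisimple_of_squarefree_aeval_eq_zero hp ?_
  change aeval (toLinAlgEquiv' (diagonalAlgHom K d)) p = 0
  rw [aeval_algEquiv, AlgHom.comp_apply, aeval_algHom_apply, hdp, map_zero, map_zero]

def structureBracket [CommSemiring K] (c : ι → ι → ι → K) (x y : ι → K) : ι → K :=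
  fun k => ∑ i, ∑ j, x i * y j * c i j k

theorem toLin'_diagonal_structureBracket [CommSemiring K] (c : ι → ι → ι → K) (d : ι → K)
    (hd : ∀ i j k, c i j k ≠ 0 → d k = d i + d j) (x y : ι → K) :
    toLin' (diagonal d) (structureBracket c x y) =
      structureBracket c (toLin' (diagonal d) x) y +
        structureBracket c x (toLin' (diagonal d) y) := by
  funext k
  simp only [structureBracket, Pi.add_apply, toLin'_diagonal_apply, Finset.mul_sum,
    ← Finset.sum_add_distrib]
  refine Finset.sum_congr rfl fun i _ => Finset.sum_congr rfl fun j _ => ?_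
  by_cases hc : c i j k = 0
  · simp [hc]
  · rw [hd i j k hc]
    ring

end Diagonal

theorem cplus_ne_zero {i j : ℕ} {k : Fin 8} (h : cplus i j k ≠ 0) :
    i = 0 ∧ 1 ≤ j ∧ (k : ℕ) = j + 1 := by
  unfold cplus e at h
  split_ifs at h <;> simp_all

theorem toLin'_diagonal_mu (d : Fin 8 → ℝ)
    (hd : ∀ j k : Fin 8, 1 ≤ (j : ℕ) → (k : ℕ) = j + 1 → d k = d 0 + d j) (x y : Fin 8 → ℝ) :
    toLin' (diagonal d) (mu x y) = mu (toLin' (diagonal d) x) y + mu x (toLin' (diagonal d) y) := by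
  refine toLin'_diagonal_structureBracket (fun i j => cst i j) d (fun i j k hc => ?_) x y
  unfold cst at hc
  split_ifs at hc
  · obtain ⟨hi, hj, hk⟩ := cplus_ne_zero hc
    obtain rfl : i = 0 := Fin.ext hi
    exact hd j k hj hk
  · obtain ⟨hj, hi, hk⟩ := cplus_ne_zero (neg_ne_zero.mp hc)
    obtain rfl : j = 0 := Fin.ext hj
    rw [hd i k hi hk, add_comm]
  · exact absurd rfl hc

theorem dphi_succ (j k : Fin 8) (hj : 1 ≤ (j : ℕ)) (hk : (k : ℕ) = j + 1) :
    dphi k = dphi 0 + dphi j := by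
  have hk0 : (k : ℕ) ≠ 0 := by omega
  have hk1 : (k : ℕ) ≠ 1 := by omega
  have hj0 : (j : ℕ) ≠ 0 := by omega
  simp only [dphi, Fin.val_zero, if_true, if_neg hk0, if_neg hk1, if_neg hj0]
  rw [show ((k : ℕ) : ℝ) = j + 1 by exact_mod_cast hk]
  split_ifs with hj1
  · rw [hj1]; norm_num
  · ring

theorem dpsi_succ (j k : Fin 8) (hj : 1 ≤ (j : ℕ)) (hk : (k : ℕ) = j + 1) :
    dpsi k = dpsi 0 + dpsi j := by
  have hk0 : (k : ℕ) ≠ 0 := by omega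
  have hj0 : (j : ℕ) ≠ 0 := by omega
  simp [dpsi, hk0, hj0]

theorem linearIndependent_dphi_dpsi : LinearIndependent ℝ ![dphi, dpsi] := by
  refine LinearIndependent.pair_iff.mpr fun s t h => ?_
  have h0 : s = 0 := by simpa [dphi, dpsi] using congrFun h 0
  have h1 : s * 26 + t = 0 := by simpa [dphi, dpsi] using congrFun h 1
  exact ⟨h0, by simpa [h0] using h1⟩

/-- `φ` and `ψ` are linearly independent commuting semisimple derivations of `m₀(8)`,
so `m₀(8)` has rank at least `2`. -/
theorem stmt19 :
    (∀ x y : Fin 8 → ℝ, phi (mu x y) = mu (phi x) y + mu x (phi y)) ∧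
    (∀ x y : Fin 8 → ℝ, psi (mu x y) = mu (psi x) y + mu x (psi y)) ∧
    Commute phi psi ∧
    LinearIndependent ℝ ![phi, psi] ∧
    phi.IsSemisimple ∧ psi.IsSemisimple := by
  refine ⟨toLin'_diagonal_mu dphi dphi_succ, toLin'_diagonal_mu dpsi dpsi_succ,
    commute_toLin'_diagonal dphi dpsi, ?_, isSemisimple_toLin'_diagonal dphi,
    isSemisimple_toLin'_diagonal dpsi⟩
  have hvec : ![phi, psi] = fun i => toLin' (diagonal (![dphi, dpsi] i)) := by
    ext i : 1
    fin_cases i <;> rfl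
  exact hvec ▸ linearIndependent_dphi_dpsi.toLin'_diagonal

end
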